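/- arXiv:1407.3753 — 4 statements merged into one kernel-verified Lean document; each statement's English description precedes it below -/
import Mathlib

section
/- In the Gaussian observation model with uniform background B̃_i = B̃ > 0 for all i, any estimator F̂ : ℕⁿ → ℝ with finite second moment satisfying the regularity identity E[F̂(I)·Σ_{i=1}^n g_i(x_c)(I_i/λ_i − 1)] = 1 obeys Var(F̂(I)) ≥ 2πσ²·B̃ · (Σ_{i=1}^n J_i(x_c)² / (1 + (F̃/(√(2π)·σ·B̃))·J_i(x_c)))^{-1}, where J_i(x_c) = ∫_{x_i−Δx/2}^{x_i+Δx/2} e^{−(x−x_c)²/(2σ²)} dx; equivalently, the Fisher information Σ_{i=1}^n g_i(x_c)²/(F̃ g_i(x_c) + B̃) equals (1/(2πσ²B̃)) · Σ_{i=1}^n J_i(x_c)²/(1 + (F̃/(√(2π)σB̃)) J_i(x_c)). -/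
/-!
The score of the Poisson likelihood with respect to the flux, `S = Σ gᵢ (Iᵢ/λᵢ - 1)`, has mean
zero and, since the pixels are independent and a Poisson count has variance equal to its mean,
variance `Σ gᵢ²/λᵢ`. The regularity identity says `cov(F̂, S) = 1`, so the Cauchy–Schwarz
inequality gives `Var F̂ ≥ 1 / Var S`. Substituting `gᵢ = Jᵢ/(√(2π)σ)` rewrites the Fisher
information `Σ gᵢ²/(F̃gᵢ + B̃)` in the stated form.
-/

open MeasureTheory ProbabilityTheory Real

open scoped NNReal Nat

namespace ProbabilityTheory

section Poisson

variable (r : ℝ≥0)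

lemma hasSum_poissonMeasure_descFactorial (k : ℕ) :
    HasSum (fun n : ℕ => exp (-r) * r ^ n / n ! * (n.descFactorial k : ℝ)) (r ^ k) := by
  refine (hasSum_nat_add_iff' k).mp ?_
  have hlow : ∑ n ∈ Finset.range k, exp (-r) * r ^ n / n ! * (n.descFactorial k : ℝ) = 0 :=
    Finset.sum_eq_zero fun n hn => by
      simp [Nat.descFactorial_eq_zero_iff_lt.mpr (Finset.mem_range.mp hn)]
  have hshift : ∀ n : ℕ, exp (-r) * r ^ (n + k) / (n + k)! * ((n + k).descFactorial k : ℝ)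
      = r ^ k * (exp (-r) * r ^ n / n !) := fun n => by
    have h := Nat.factorial_mul_descFactorial (Nat.le_add_left k n)
    rw [Nat.add_sub_cancel] at h
    rw [← h]
    push_cast
    field_simp
    ring
  simpa [hlow, hshift] using (hasSum_one_poissonMeasure r).mul_left ((r : ℝ) ^ k)

lemma integrable_poissonMeasure_descFactorial (k : ℕ) :
    Integrable (fun n : ℕ => (n.descFactorial k : ℝ)) (poissonMeasure r) :=
  integrable_poissonMeasure_iff.mpr <| by
    simpa using (hasSum_poissonMeasure_descFactorial r k).summable

lemma integral_poissonMeasure_descFactorial (k : ℕ) :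
    ∫ n, (n.descFactorial k : ℝ) ∂poissonMeasure r = r ^ k := by
  rw [integral_poissonMeasure]
  exact (hasSum_poissonMeasure_descFactorial r k).tsum_eq

lemma integral_poissonMeasure_natCast : ∫ n, (n : ℝ) ∂poissonMeasure r = r := by
  simpa using integral_poissonMeasure_descFactorial r 1

lemma natCast_sq_eq_descFactorial (n : ℕ) :
    (n : ℝ) ^ 2 = (n.descFactorial 2 : ℝ) + (n.descFactorial 1 : ℝ) := by
  cases n <;> simp; ring

lemma memLp_two_poissonMeasure_natCast : MemLp (fun n : ℕ => (n : ℝ)) 2 (poissonMeasure r) := by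
  refine (memLp_two_iff_integrable_sq (by fun_prop)).mpr ?_
  simp_rw [natCast_sq_eq_descFactorial]
  exact (integrable_poissonMeasure_descFactorial r 2).add
    (integrable_poissonMeasure_descFactorial r 1)

lemma variance_poissonMeasure_natCast : Var[fun n : ℕ => (n : ℝ); poissonMeasure r] = r := by
  rw [variance_eq_sub (memLp_two_poissonMeasure_natCast r)]
  simp only [Pi.pow_apply, natCast_sq_eq_descFactorial]
  rw [integral_add (integrable_poissonMeasure_descFactorial r 2)
    (integrable_poissonMeasure_descFactorial r 1), integral_poissonMeasure_descFactorial,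
    integral_poissonMeasure_descFactorial, integral_poissonMeasure_natCast]
  ring

end Poisson

section Covariance

variable {Ω : Type*} {mΩ : MeasurableSpace Ω} {μ : Measure Ω} {X Y : Ω → ℝ}

lemma covariance_sq_le_variance_mul_variance [IsFiniteMeasure μ] (hX : MemLp X 2 μ)
    (hY : MemLp Y 2 μ) : cov[X, Y; μ] ^ 2 ≤ Var[X; μ] * Var[Y; μ] := by
  have hquad : ∀ t : ℝ, 0 ≤ Var[X; μ] * (t * t) + 2 * cov[X, Y; μ] * t + Var[Y; μ] := by
    intro t
    have h := variance_nonneg (t • X + Y) μ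
    rw [variance_add (hX.const_smul t) hY, variance_smul, covariance_smul_left] at h
    linarith
  have h := discrim_le_zero hquad
  rw [discrim] at h
  linarith

lemma inv_variance_le_variance_of_covariance_eq_one [IsFiniteMeasure μ] (hX : MemLp X 2 μ)
    (hY : MemLp Y 2 μ) (hXY : cov[X, Y; μ] = 1) : (Var[Y; μ])⁻¹ ≤ Var[X; μ] := by
  have h := covariance_sq_le_variance_mul_variance hX hY
  rw [hXY, one_pow] at h
  have hY0 : 0 < Var[Y; μ] :=
    (variance_nonneg Y μ).lt_of_ne fun h0 => by rw [← h0, mul_zero] at h; linarith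
  rwa [inv_le_iff_one_le_mul₀ hY0]

end Covariance

section PoissonScore

lemma memLp_two_poissonMeasure_scoreTerm (r : ℝ≥0) (b c : ℝ) :
    MemLp (fun n : ℕ => b * ((n : ℝ) / c - 1)) 2 (poissonMeasure r) := by
  simpa only [div_eq_mul_inv, Pi.sub_apply] using
    (((memLp_two_poissonMeasure_natCast r).mul_const c⁻¹).sub (memLp_const 1)).const_mul b

lemma integral_poissonMeasure_scoreTerm (b : ℝ) {c : ℝ} (hc : 0 < c) :
    ∫ n : ℕ, b * ((n : ℝ) / c - 1) ∂poissonMeasure c.toNNReal = 0 := by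
  have hn := (memLp_two_poissonMeasure_natCast c.toNNReal).integrable one_le_two
  rw [integral_const_mul, integral_sub (hn.div_const c) (integrable_const 1), integral_div,
    integral_poissonMeasure_natCast, Real.coe_toNNReal _ hc.le, div_self hc.ne']
  simp

lemma variance_poissonMeasure_scoreTerm (b : ℝ) {c : ℝ} (hc : 0 < c) :
    Var[fun n : ℕ => b * ((n : ℝ) / c - 1); poissonMeasure c.toNNReal] = b ^ 2 / c := by
  simp_rw [variance_const_mul, div_eq_mul_inv]
  rw [variance_sub_const (by fun_prop), variance_mul_const, variance_poissonMeasure_natCast,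
    Real.coe_toNNReal _ hc.le]
  field_simp

variable {ι : Type*} [Fintype ι]

/-- The score `∂/∂θ log L` of independent Poisson counts `k i` whose means `lam i` depend on a
parameter `θ` with `∂lam i/∂θ = a i`. -/
noncomputable def poissonScore (a lam : ι → ℝ) (k : ι → ℕ) : ℝ :=
  ∑ i, a i * ((k i : ℝ) / lam i - 1)

variable {a lam : ι → ℝ}

lemma poissonScore_eq_sum :
    poissonScore a lam = ∑ i, fun k : ι → ℕ => a i * ((k i : ℝ) / lam i - 1) := by
  ext k
  simp [poissonScore]

lemma memLp_two_poissonScore :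
    MemLp (poissonScore a lam) 2 (Measure.pi fun i => poissonMeasure (lam i).toNNReal) := by
  rw [poissonScore_eq_sum]
  exact memLp_finsetSum' _ fun i _ =>
    (memLp_two_poissonMeasure_scoreTerm _ _ _).comp_measurePreserving (measurePreserving_eval _ i)

lemma integral_poissonScore (hlam : ∀ i, 0 < lam i) :
    ∫ k, poissonScore a lam k ∂(Measure.pi fun i => poissonMeasure (lam i).toNNReal) = 0 := by
  have hterm : ∀ i, Integrable (fun k : ι → ℕ => a i * ((k i : ℝ) / lam i - 1))
      (Measure.pi fun i => poissonMeasure (lam i).toNNReal) := fun i =>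
    ((memLp_two_poissonMeasure_scoreTerm _ _ _).comp_measurePreserving
      (measurePreserving_eval _ i)).integrable one_le_two
  simp only [poissonScore]
  rw [integral_finsetSum _ fun i _ => hterm i]
  refine Finset.sum_eq_zero fun i _ => ?_
  rw [integral_comp_eval (X := fun _ => ℕ) (f := fun n : ℕ => a i * ((n : ℝ) / lam i - 1))
    (by fun_prop), integral_poissonMeasure_scoreTerm _ (hlam i)]

lemma variance_poissonScore (hlam : ∀ i, 0 < lam i) :
    Var[poissonScore a lam; Measure.pi fun i => poissonMeasure (lam i).toNNReal]
      = ∑ i, a i ^ 2 / lam i := by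
  rw [poissonScore_eq_sum, variance_sum_pi fun i => memLp_two_poissonMeasure_scoreTerm _ _ _]
  exact Finset.sum_congr rfl fun i _ => variance_poissonMeasure_scoreTerm _ (hlam i)

lemma inv_sum_le_variance_of_integral_mul_poissonScore (hlam : ∀ i, 0 < lam i)
    {X : (ι → ℕ) → ℝ}
    (hX : MemLp X 2 (Measure.pi fun i => poissonMeasure (lam i).toNNReal))
    (hXS : ∫ k, X k * poissonScore a lam k
      ∂(Measure.pi fun i => poissonMeasure (lam i).toNNReal) = 1) :
    (∑ i, a i ^ 2 / lam i)⁻¹ ≤ Var[X; Measure.pi fun i => poissonMeasure (lam i).toNNReal] := by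
  rw [← variance_poissonScore hlam]
  refine inv_variance_le_variance_of_covariance_eq_one hX memLp_two_poissonScore ?_
  rw [covariance_eq_sub hX memLp_two_poissonScore, integral_poissonScore hlam, mul_zero,
    sub_zero]
  exact hXS

end PoissonScore

end ProbabilityTheory

lemma sq_div_mul_add_eq_of_eq_div {g J s F B : ℝ} (hg : g = J / s) (hs : s ≠ 0) (hB : B ≠ 0) :
    g ^ 2 / (F * g + B) = 1 / (s ^ 2 * B) * (J ^ 2 / (1 + F / (s * B) * J)) := by
  have h1 : F * g + B = (F * J + s * B) / s := by rw [hg]; field_simp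
  have h2 : 1 + F / (s * B) * J = (F * J + s * B) / (s * B) := by field_simp; ring
  rw [h1, h2, div_div_eq_mul_div, div_div_eq_mul_div, hg]
  field_simp

/-- **Cramér–Rao bound for flux in the Gaussian model with uniform background.**
Pixels of size `Δx` centered at `xpix i` collect the flux fractions
`g i = ∫ Φ(x − x_c) dx` of a Gaussian PSF; counts are independent Poisson with
means `λ i = F̃ g i + B̃`, `B̃ > 0` uniform.  Any estimator with finite second
moment satisfying the regularity identity obeys
`Var ≥ 2πσ²B̃ ⬝ (Σ J i² / (1 + F̃ J i/(√(2π)σB̃)))⁻¹`; equivalently the Fisher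
information `Σ g i²/(F̃ g i + B̃)` equals
`(1/(2πσ²B̃)) Σ J i²/(1 + F̃ J i/(√(2π)σB̃))`. -/
theorem stmt_1
    (n : ℕ) (σ Δx : ℝ) (hσ : 0 < σ) (hΔx : 0 < Δx)
    (xpix : Fin n → ℝ) (xc : ℝ) (F B : ℝ) (hF : 0 < F) (hB : 0 < B)
    (g J : Fin n → ℝ)
    (hg : ∀ i, g i = ∫ x in (xpix i - Δx / 2)..(xpix i + Δx / 2),
        (1 / (Real.sqrt (2 * π) * σ)) * Real.exp (-(x - xc) ^ 2 / (2 * σ ^ 2)))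
    (hJ : ∀ i, J i = ∫ x in (xpix i - Δx / 2)..(xpix i + Δx / 2),
        Real.exp (-(x - xc) ^ 2 / (2 * σ ^ 2)))
    (lam : Fin n → ℝ) (hlam : ∀ i, lam i = F * g i + B)
    (μ : Measure (Fin n → ℕ))
    (hμ : μ = Measure.pi fun i => poissonMeasure (lam i).toNNReal)
    (Fhat : (Fin n → ℕ) → ℝ)
    (hmem : MemLp Fhat 2 μ)
    (hreg : ∫ k, Fhat k * (∑ i, g i * ((k i : ℝ) / lam i - 1)) ∂μ = 1) :
    2 * π * σ ^ 2 * B *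
        (∑ i, J i ^ 2 / (1 + F / (Real.sqrt (2 * π) * σ * B) * J i))⁻¹
      ≤ variance Fhat μ ∧
    ∑ i, g i ^ 2 / (F * g i + B)
      = (1 / (2 * π * σ ^ 2 * B)) *
        ∑ i, J i ^ 2 / (1 + F / (Real.sqrt (2 * π) * σ * B) * J i) := by
  have hs : 0 < √(2 * π) * σ := by positivity
  have hJ_nonneg : ∀ i, 0 ≤ J i := fun i => hJ i ▸
    intervalIntegral.integral_nonneg (by linarith) fun x _ => (exp_pos _).le
  have hgJ : ∀ i, g i = J i / (√(2 * π) * σ) := fun i => by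
    rw [hg i, intervalIntegral.integral_const_mul, ← hJ i, one_div, inv_mul_eq_div]
  have hfisher : ∑ i, g i ^ 2 / (F * g i + B)
      = (1 / (2 * π * σ ^ 2 * B)) *
        ∑ i, J i ^ 2 / (1 + F / (Real.sqrt (2 * π) * σ * B) * J i) := by
    rw [Finset.mul_sum]
    refine Finset.sum_congr rfl fun i _ => ?_
    rw [sq_div_mul_add_eq_of_eq_div (hgJ i) hs.ne' hB.ne', mul_pow, sq_sqrt (by positivity)]
  refine ⟨?_, hfisher⟩
  have hlam_pos : ∀ i, 0 < lam i := fun i => by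
    rw [hlam i, hgJ i]
    have := hJ_nonneg i
    positivity
  subst hμ
  calc 2 * π * σ ^ 2 * B *
        (∑ i, J i ^ 2 / (1 + F / (Real.sqrt (2 * π) * σ * B) * J i))⁻¹
      = (∑ i, g i ^ 2 / lam i)⁻¹ := by
        simp_rw [hlam, hfisher, mul_inv, one_div, inv_inv]
    _ ≤ _ := inv_sum_le_variance_of_integral_mul_poissonScore hlam_pos hmem hreg
end

section
/- Let σ > 0, x_c ∈ ℝ, and r ∈ [0,1). For Δx > 0 define pixel centers x_i = (i + r)·Δx for i ∈ ℤ and pixel flux fractions g_i(x_c) = ∫_{x_i−Δx/2}^{x_i+Δx/2} Φ(x − x_c) dx, where Φ(x) = (1/(√(2π)σ)) e^{−x²/(2σ²)}. Then the sums Σ_{i∈ℤ} (x_i − x_c)²·g_i(x_c) converge, and lim_{Δx→0⁺} Σ_{i∈ℤ} (x_i − x_c)²·g_i(x_c) = σ². -/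
open Real Filter Topology MeasureTheory ProbabilityTheory Set Function
open scoped NNReal

/-! Snapping every point to the center of its pixel turns the pixel sum into the integral
`∫ (c_Δ(x) - x_c)² dμ(x)` against the Gaussian law `μ`, where `|c_Δ(x) - x| ≤ Δ/2`.
As `Δ → 0` these integrands converge pointwise to `(x - x_c)²` and, for `Δ ≤ 1`, are dominated
by `2 (x - x_c)² + 1/2`; by dominated convergence the sums tend to the variance `σ²` of `μ`.
This works for any finite measure with a finite second moment. -/

noncomputable section

-- Half-open, so that the pixels tile `ℝ` and `∫ x in a..b` is the integral over `pixel`.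
def pixel (r Δ : ℝ) (i : ℤ) : Set ℝ :=
  Ioc (((i : ℝ) + r) * Δ - Δ / 2) (((i : ℝ) + r) * Δ + Δ / 2)

def pixelIndex (r Δ x : ℝ) : ℤ := ⌈x / Δ - r - 1 / 2⌉

def pixelCenter (r Δ x : ℝ) : ℝ := ((pixelIndex r Δ x : ℝ) + r) * Δ

end

section Pixels

variable {r Δ : ℝ}

theorem mem_pixel_iff (hΔ : 0 < Δ) {x : ℝ} {i : ℤ} :
    x ∈ pixel r Δ i ↔ pixelIndex r Δ x = i := by
  rw [pixel, mem_Ioc, pixelIndex, Int.ceil_eq_iff]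
  constructor
  · rintro ⟨h₁, h₂⟩
    have := (lt_div_iff₀ hΔ).2 (show ((i : ℝ) + r - 1 / 2) * Δ < x by linarith)
    have := (div_le_iff₀ hΔ).2 (show x ≤ ((i : ℝ) + r + 1 / 2) * Δ by linarith)
    constructor <;> linarith
  · rintro ⟨h₁, h₂⟩
    have := (lt_div_iff₀ hΔ).1 (show (i : ℝ) + r - 1 / 2 < x / Δ by linarith)
    have := (div_le_iff₀ hΔ).1 (show x / Δ ≤ (i : ℝ) + r + 1 / 2 by linarith)
    constructor <;> linarith

theorem measurableSet_pixel (i : ℤ) : MeasurableSet (pixel r Δ i) := measurableSet_Ioc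

theorem iUnion_pixel (hΔ : 0 < Δ) : ⋃ i, pixel r Δ i = univ :=
  eq_univ_of_forall fun x => mem_iUnion.2 ⟨pixelIndex r Δ x, (mem_pixel_iff hΔ).2 rfl⟩

theorem pairwise_disjoint_pixel (hΔ : 0 < Δ) : Pairwise (Disjoint on pixel r Δ) :=
  fun _ _ hij => disjoint_left.2 fun _ hi hj =>
    hij (((mem_pixel_iff hΔ).1 hi).symm.trans ((mem_pixel_iff hΔ).1 hj))

theorem abs_pixelCenter_sub_le (hΔ : 0 < Δ) (x : ℝ) : |pixelCenter r Δ x - x| ≤ Δ / 2 := by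
  have hx : x ∈ pixel r Δ (pixelIndex r Δ x) := (mem_pixel_iff hΔ).2 rfl
  rw [pixel, mem_Ioc] at hx
  rw [pixelCenter, abs_le]
  constructor <;> linarith [hx.1, hx.2]

theorem sq_pixelCenter_sub_le (hΔ : 0 < Δ) (x c : ℝ) :
    (pixelCenter r Δ x - c) ^ 2 ≤ 2 * (x - c) ^ 2 + Δ ^ 2 / 2 := by
  have h : (pixelCenter r Δ x - x) ^ 2 ≤ (Δ / 2) ^ 2 := by
    rw [← sq_abs]
    exact pow_le_pow_left₀ (abs_nonneg _) (abs_pixelCenter_sub_le hΔ x) 2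
  nlinarith [sq_nonneg (pixelCenter r Δ x - x - (x - c))]

theorem measurable_pixelCenter : Measurable (pixelCenter r Δ) := by
  unfold pixelCenter pixelIndex
  fun_prop

theorem tendsto_pixelCenter (x : ℝ) :
    Tendsto (fun Δ => pixelCenter r Δ x) (𝓝[>] 0) (𝓝 x) := by
  rw [tendsto_iff_norm_sub_tendsto_zero]
  have hhalf : Tendsto (fun Δ : ℝ => Δ / 2) (𝓝[>] 0) (𝓝 0) := by
    simpa using ((continuous_id.div_const (2 : ℝ)).tendsto 0).mono_left nhdsWithin_le_nhds
  refine squeeze_zero' (Eventually.of_forall fun _ => norm_nonneg _) ?_ hhalf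
  filter_upwards [self_mem_nhdsWithin] with Δ hΔ using abs_pixelCenter_sub_le hΔ x

end Pixels

section Moments

variable {μ : Measure ℝ} [IsFiniteMeasure μ] {r c : ℝ}

theorem integrable_sq_pixelCenter_sub {Δ : ℝ} (hΔ : 0 < Δ)
    (hμ : Integrable (fun x => (x - c) ^ 2) μ) :
    Integrable (fun x => (pixelCenter r Δ x - c) ^ 2) μ :=
  ((hμ.const_mul 2).add (integrable_const (Δ ^ 2 / 2))).mono'
    ((measurable_pixelCenter.sub_const c).pow_const 2).aestronglyMeasurable
    (ae_of_all _ fun x => by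
      rw [Real.norm_of_nonneg (sq_nonneg _)]
      exact sq_pixelCenter_sub_le hΔ x c)

theorem hasSum_sq_pixelCenter_sub {Δ : ℝ} (hΔ : 0 < Δ)
    (hμ : Integrable (fun x => (x - c) ^ 2) μ) :
    HasSum (fun i : ℤ => (((i : ℝ) + r) * Δ - c) ^ 2 * μ.real (pixel r Δ i))
      (∫ x, (pixelCenter r Δ x - c) ^ 2 ∂μ) := by
  have h := hasSum_integral_iUnion (s := pixel r Δ) measurableSet_pixel
    (pairwise_disjoint_pixel hΔ) (integrable_sq_pixelCenter_sub (r := r) hΔ hμ).integrableOn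
  rw [iUnion_pixel hΔ, Measure.restrict_univ] at h
  have hpixel : ∀ i : ℤ, ∫ x in pixel r Δ i, (pixelCenter r Δ x - c) ^ 2 ∂μ
      = (((i : ℝ) + r) * Δ - c) ^ 2 * μ.real (pixel r Δ i) := fun i => by
    rw [setIntegral_congr_fun (measurableSet_pixel i) fun x hx => by
        rw [pixelCenter, (mem_pixel_iff hΔ).1 hx],
      setIntegral_const, smul_eq_mul, mul_comm]
  simpa only [hpixel] using h

theorem tendsto_integral_sq_pixelCenter_sub (hμ : Integrable (fun x => (x - c) ^ 2) μ) :
    Tendsto (fun Δ => ∫ x, (pixelCenter r Δ x - c) ^ 2 ∂μ) (𝓝[>] 0)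
      (𝓝 (∫ x, (x - c) ^ 2 ∂μ)) := by
  refine tendsto_integral_filter_of_dominated_convergence (fun x => 2 * (x - c) ^ 2 + 1 / 2)
    (Eventually.of_forall fun _ =>
      ((measurable_pixelCenter.sub_const c).pow_const 2).aestronglyMeasurable)
    ?_ ((hμ.const_mul 2).add (integrable_const _))
    (ae_of_all _ fun x => ((tendsto_pixelCenter x).sub_const c).pow 2)
  filter_upwards [Ioc_mem_nhdsGT (zero_lt_one' ℝ)] with Δ hΔ
  refine ae_of_all _ fun x => ?_
  rw [Real.norm_of_nonneg (sq_nonneg _)]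
  nlinarith [sq_pixelCenter_sub_le (r := r) hΔ.1 x c, hΔ.1, hΔ.2]

end Moments

section Gaussian

variable {m : ℝ} {v : ℝ≥0}

theorem gaussianReal_real_eq_setIntegral (hv : v ≠ 0) (s : Set ℝ) :
    (gaussianReal m v).real s = ∫ x in s, gaussianPDFReal m v x := by
  rw [measureReal_def, gaussianReal_apply_eq_integral m hv,
    ENNReal.toReal_ofReal (setIntegral_nonneg_of_ae (ae_of_all _ (gaussianPDFReal_nonneg m v)))]

theorem integrable_sq_sub_gaussianReal : Integrable (fun x => (x - m) ^ 2) (gaussianReal m v) :=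
  ((memLp_id_gaussianReal' 2 ENNReal.ofNat_ne_top).sub (memLp_const m)).integrable_sq

theorem integral_sq_sub_gaussianReal : ∫ x, (x - m) ^ 2 ∂gaussianReal m v = v := by
  rw [← variance_fun_id_gaussianReal (μ := m), variance_eq_integral measurable_id'.aemeasurable,
    integral_id_gaussianReal]

theorem gaussianPDFReal_sq_toNNReal {σ : ℝ} (hσ : 0 < σ) (x : ℝ) :
    gaussianPDFReal m (σ ^ 2).toNNReal x
      = 1 / (√(2 * π) * σ) * exp (-(x - m) ^ 2 / (2 * σ ^ 2)) := by
  rw [gaussianPDFReal_def, Real.coe_toNNReal _ (sq_nonneg σ), Real.sqrt_mul (by positivity),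
    Real.sqrt_sq hσ.le, one_div]

end Gaussian

theorem stmt_9_general
    (σ xc r : ℝ) (hσ : 0 < σ)
    (g : ℝ → ℤ → ℝ)
    (hg : ∀ Δx : ℝ, ∀ i : ℤ, g Δx i =
      ∫ x in (((i : ℝ) + r) * Δx - Δx / 2)..(((i : ℝ) + r) * Δx + Δx / 2),
        (1 / (Real.sqrt (2 * π) * σ)) * Real.exp (-(x - xc) ^ 2 / (2 * σ ^ 2))) :
    (∀ Δx : ℝ, 0 < Δx →
      Summable fun i : ℤ => (((i : ℝ) + r) * Δx - xc) ^ 2 * g Δx i) ∧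
    Tendsto (fun Δx : ℝ => ∑' i : ℤ, (((i : ℝ) + r) * Δx - xc) ^ 2 * g Δx i)
      (𝓝[>] 0) (𝓝 (σ ^ 2)) := by
  set μ := gaussianReal xc (σ ^ 2).toNNReal
  have hv : (σ ^ 2).toNNReal ≠ 0 := by simpa using hσ.ne'
  have hg_pixel : ∀ Δ, 0 < Δ → ∀ i, g Δ i = μ.real (pixel r Δ i) := fun Δ hΔ i => by
    rw [hg, intervalIntegral.integral_of_le (by linarith), gaussianReal_real_eq_setIntegral hv,
      pixel]
    simp only [gaussianPDFReal_sq_toNNReal hσ]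
  have hsum : ∀ Δ, 0 < Δ → HasSum (fun i : ℤ => (((i : ℝ) + r) * Δ - xc) ^ 2 * g Δ i)
      (∫ x, (pixelCenter r Δ x - xc) ^ 2 ∂μ) := fun Δ hΔ => by
    simpa only [hg_pixel Δ hΔ] using hasSum_sq_pixelCenter_sub hΔ integrable_sq_sub_gaussianReal
  refine ⟨fun Δ hΔ => (hsum Δ hΔ).summable, ?_⟩
  have hlim := tendsto_integral_sq_pixelCenter_sub (r := r) (integrable_sq_sub_gaussianReal
    (m := xc) (v := (σ ^ 2).toNNReal))
  rw [integral_sq_sub_gaussianReal, Real.coe_toNNReal _ (sq_nonneg σ)] at hlim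
  refine hlim.congr' ?_
  filter_upwards [self_mem_nhdsWithin] with Δ hΔ using (hsum Δ hΔ).tsum_eq.symm

/-- **High-resolution limit: second moment of the pixelated Gaussian.**
For pixels of size `Δx` centered at `x_i = (i+r)Δx`, `i ∈ ℤ`, with Gaussian
flux fractions `g_i(x_c)`, the sums `Σ_{i∈ℤ} (x_i − x_c)² g_i(x_c)` converge
and tend to `σ²` as `Δx → 0⁺`. -/
theorem stmt_9
    (σ xc r : ℝ) (hσ : 0 < σ) (hr : r ∈ Set.Ico (0 : ℝ) 1)
    (g : ℝ → ℤ → ℝ)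
    (hg : ∀ Δx : ℝ, ∀ i : ℤ, g Δx i =
      ∫ x in (((i : ℝ) + r) * Δx - Δx / 2)..(((i : ℝ) + r) * Δx + Δx / 2),
        (1 / (Real.sqrt (2 * π) * σ)) * Real.exp (-(x - xc) ^ 2 / (2 * σ ^ 2))) :
    (∀ Δx : ℝ, 0 < Δx →
      Summable fun i : ℤ => (((i : ℝ) + r) * Δx - xc) ^ 2 * g Δx i) ∧
    Tendsto (fun Δx : ℝ => ∑' i : ℤ, (((i : ℝ) + r) * Δx - xc) ^ 2 * g Δx i)
      (𝓝[>] 0) (𝓝 (σ ^ 2)) :=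
  stmt_9_general σ xc r hσ g hg
end

section
/- Let σ > 0, x_c ∈ ℝ, and r ∈ [0,1). For Δx > 0 define pixel centers x_i = (i + r)·Δx for i ∈ ℤ and g_i(x_c) = ∫_{x_i−Δx/2}^{x_i+Δx/2} Φ(x − x_c) dx, where Φ(x) = (1/(√(2π)σ)) e^{−x²/(2σ²)}. Then lim_{Δx→0⁺} (1/Δx²)·Σ_{i∈ℤ} g_i(x_c)³ = 1/(2√3·π·σ²). -/
/-
The normalised sum `Δx⁻² Σ g_i³ = Δx Σ (g_i / Δx)³` is exactly the integral of the cube of the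
step function `x ↦ g_{i(x)} / Δx`, where `i(x)` is the pixel containing `x`. By continuity of `Φ`
this step function tends to `Φ(x - x_c)` pointwise as `Δx → 0⁺`, and for `Δx ≤ 1` it is bounded
by a Gaussian of twice the variance, because `(x - x_c)² ≤ 2 (t - x_c)² + 2` when `|t - x| ≤ 1`.
Dominated convergence gives the limit `∫ Φ³ = 1 / (2√3 π σ²)`.
-/

open Real Filter Topology MeasureTheory Set Function

noncomputable section

namespace Pixel

variable {r Δx x : ℝ} {i : ℤ}

def pixel (r Δx : ℝ) (i : ℤ) : Set ℝ := Ico ((i + r) * Δx - Δx / 2) ((i + r) * Δx + Δx / 2)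

def index (r Δx x : ℝ) : ℤ := ⌊x / Δx + (1 / 2 - r)⌋

def flux (f : ℝ → ℝ) (r Δx : ℝ) (i : ℤ) : ℝ :=
  ∫ t in ((i + r) * Δx - Δx / 2)..((i + r) * Δx + Δx / 2), f t

def average (f : ℝ → ℝ) (r Δx x : ℝ) : ℝ := flux f r Δx (index r Δx x) / Δx

theorem index_eq_iff (hΔ : 0 < Δx) : index r Δx x = i ↔ x ∈ pixel r Δx i := by
  rw [index, Int.floor_eq_iff, pixel, mem_Ico, ← sub_le_iff_le_add, le_div_iff₀ hΔ,
    ← lt_sub_iff_add_lt, div_lt_iff₀ hΔ]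
  constructor <;> rintro ⟨h₁, h₂⟩ <;> constructor <;> linarith

theorem mem_pixel_index (hΔ : 0 < Δx) : x ∈ pixel r Δx (index r Δx x) :=
  (index_eq_iff hΔ).1 rfl

theorem pairwise_disjoint_pixel (hΔ : 0 < Δx) : Pairwise (Disjoint on pixel r Δx) :=
  fun _ _ hij => disjoint_left.2 fun _ hi hj =>
    hij (((index_eq_iff hΔ).2 hi).symm.trans ((index_eq_iff hΔ).2 hj))

theorem iUnion_pixel (hΔ : 0 < Δx) : ⋃ i, pixel r Δx i = univ :=
  eq_univ_of_forall fun _ => mem_iUnion.2 ⟨_, mem_pixel_index hΔ⟩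

theorem measurable_index : Measurable (index r Δx) :=
  ((measurable_id.div_const Δx).add_const _).floor

theorem measurable_average {f : ℝ → ℝ} : Measurable (average f r Δx) :=
  (measurable_from_top.comp (measurable_index (r := r))).div_const (f := flux f r Δx ∘ _) Δx

theorem abs_sub_le_of_mem_pixel (hx : x ∈ pixel r Δx i)
    {t : ℝ} (ht : t ∈ Icc ((i + r) * Δx - Δx / 2) ((i + r) * Δx + Δx / 2)) :
    |t - x| ≤ Δx := by
  have := Real.dist_le_of_mem_Icc ht (Ico_subset_Icc_self hx)
  rw [Real.dist_eq] at this
  linarith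

theorem integral_comp_index (hΔ : 0 < Δx) (F : ℤ → ℝ)
    (hF : Integrable fun x => F (index r Δx x)) :
    ∫ x, F (index r Δx x) = Δx * ∑' i, F i := by
  rw [← setIntegral_univ, ← iUnion_pixel (r := r) hΔ,
    integral_iUnion (s := pixel r Δx) (fun _ => measurableSet_Ico)
    (pairwise_disjoint_pixel hΔ) hF.integrableOn, ← tsum_mul_left]
  congr with i
  rw [setIntegral_congr_fun (s := pixel r Δx i) measurableSet_Ico
      fun x hx => by rw [(index_eq_iff hΔ).2 hx],
    setIntegral_const, pixel, volume_real_Ico_of_le (by linarith), smul_eq_mul]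
  ring

theorem abs_average_le {f : ℝ → ℝ} (hΔ : 0 < Δx) {B : ℝ}
    (hB : ∀ t, |t - x| ≤ Δx → |f t| ≤ B) : |average f r Δx x| ≤ B := by
  have hx := mem_pixel_index (r := r) hΔ (x := x)
  have h := intervalIntegral.norm_integral_le_of_norm_le_const (C := B) (f := f)
    (a := (index r Δx x + r) * Δx - Δx / 2) (b := (index r Δx x + r) * Δx + Δx / 2)
    fun t ht => hB t (abs_sub_le_of_mem_pixel hx (Ioc_subset_Icc_self
      (by rwa [uIoc_of_le (by linarith)] at ht)))
  rw [show (index r Δx x + r) * Δx + Δx / 2 - ((index r Δx x + r) * Δx - Δx / 2) = Δx by ring,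
    abs_of_pos hΔ] at h
  rw [average, abs_div, abs_of_pos hΔ, div_le_iff₀ hΔ]
  exact h

theorem tendsto_average {f : ℝ → ℝ} (hf : Continuous f) (r x : ℝ) :
    Tendsto (fun Δx => average f r Δx x) (𝓝[>] 0) (𝓝 (f x)) := by
  set u := fun Δx => (index r Δx x + r) * Δx - Δx / 2
  set v := fun Δx => (index r Δx x + r) * Δx + Δx / 2
  have hsqueeze : ∀ w : ℝ → ℝ, (∀ Δx, 0 < Δx → |w Δx - x| ≤ Δx) → Tendsto w (𝓝[>] 0) (𝓝 x) := by
    intro w hw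
    rw [tendsto_iff_norm_sub_tendsto_zero]
    refine squeeze_zero' (Eventually.of_forall fun _ => norm_nonneg _)
      (eventually_nhdsWithin_of_forall hw) ?_
    exact tendsto_nhdsWithin_of_tendsto_nhds tendsto_id
  have hu : Tendsto u (𝓝[>] 0) (𝓝 x) := hsqueeze u fun Δx hΔ =>
    abs_sub_le_of_mem_pixel (mem_pixel_index hΔ) (left_mem_Icc.2 (by linarith))
  have hv : Tendsto v (𝓝[>] 0) (𝓝 x) := hsqueeze v fun Δx hΔ =>
    abs_sub_le_of_mem_pixel (mem_pixel_index hΔ) (right_mem_Icc.2 (by linarith))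
  -- `∫_u^v f = Δx • f x + o(Δx)`, as `f` is continuous at `x` and `v - u = Δx`
  have ho := intervalIntegral.integral_sub_linear_isLittleO_of_tendsto_ae
    (hf.stronglyMeasurableAtFilter _ _) (tendsto_inf_left hf.continuousAt) hu hv
  have hvu : v - u = id := by funext Δx; simp only [u, v, Pi.sub_apply, id]; ring
  rw [hvu] at ho
  have := ho.tendsto_div_nhds_zero.add_const (f x)
  rw [zero_add] at this
  refine this.congr' ?_
  filter_upwards [self_mem_nhdsWithin] with Δx (hΔ : 0 < Δx)
  simp only [average, flux, u, v, id, smul_eq_mul]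
  field_simp
  ring

theorem tendsto_mul_tsum_flux_div_pow {f : ℝ → ℝ} (hf : Continuous f) (r : ℝ) {n : ℕ}
    {M : ℝ → ℝ} (hfM : ∀ x t, |t - x| ≤ 1 → |f t| ≤ M x)
    (hM : Integrable fun x => M x ^ n) :
    Tendsto (fun Δx => Δx * ∑' i, (flux f r Δx i / Δx) ^ n) (𝓝[>] 0)
      (𝓝 (∫ x, f x ^ n)) := by
  have hsmall : Ioc (0 : ℝ) 1 ∈ 𝓝[>] 0 := Ioc_mem_nhdsGT zero_lt_one
  have hmeas : ∀ Δx, AEStronglyMeasurable (fun x => average f r Δx x ^ n) :=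
    fun _ => (measurable_average.pow_const n).aestronglyMeasurable
  have hdom : ∀ Δx ∈ Ioc (0 : ℝ) 1, ∀ x, ‖average f r Δx x ^ n‖ ≤ M x ^ n := by
    rintro Δx ⟨hΔ, hΔ₁⟩ x
    rw [norm_pow, Real.norm_eq_abs]
    exact pow_le_pow_left₀ (abs_nonneg _)
      (abs_average_le hΔ fun t ht => hfM x t (ht.trans hΔ₁)) n
  have hriemann : ∀ Δx ∈ Ioc (0 : ℝ) 1,
      ∫ x, average f r Δx x ^ n = Δx * ∑' i, (flux f r Δx i / Δx) ^ n := fun Δx hΔ =>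
    integral_comp_index hΔ.1 (fun i => (flux f r Δx i / Δx) ^ n)
      (hM.mono' (hmeas Δx) (ae_of_all _ (hdom Δx hΔ)))
  refine (tendsto_integral_filter_of_dominated_convergence _
    (eventually_of_mem hsmall fun Δx _ => hmeas Δx)
    (eventually_of_mem hsmall fun Δx hΔ => ae_of_all _ (hdom Δx hΔ)) hM
    (ae_of_all _ fun x => (tendsto_average hf r x).pow n)).congr' ?_
  filter_upwards [hsmall] with Δx hΔ using hriemann Δx hΔ

end Pixel

section Gaussian

variable {a b C x y t : ℝ}

theorem exp_neg_mul_sq_le (ha : 0 ≤ a) (h : |t - x| ≤ 1) :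
    exp (-a * (t - y) ^ 2) ≤ exp a * exp (-(a / 2) * (x - y) ^ 2) := by
  rw [← exp_add, exp_le_exp]
  have hsq : (t - x) ^ 2 ≤ 1 := by rw [← sq_abs]; nlinarith [abs_nonneg (t - x)]
  have hxy : (x - y) ^ 2 ≤ 2 * (t - y) ^ 2 + 2 := by nlinarith [sq_nonneg (t - y + (t - x))]
  nlinarith [mul_le_mul_of_nonneg_left hxy ha]

theorem const_mul_exp_neg_mul_sq_pow (n : ℕ) :
    (C * exp (-b * (x - y) ^ 2)) ^ n = C ^ n * exp (-(n * b) * (x - y) ^ 2) := by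
  rw [mul_pow, ← exp_nat_mul]
  ring_nf

theorem integrable_const_mul_exp_neg_mul_sq_pow (hb : 0 < b) {n : ℕ} (hn : 0 < n) :
    Integrable fun x => (C * exp (-b * (x - y) ^ 2)) ^ n := by
  simp_rw [const_mul_exp_neg_mul_sq_pow]
  exact ((integrable_exp_neg_mul_sq (by positivity)).comp_sub_right y).const_mul _

theorem integral_const_mul_exp_neg_mul_sq_pow (n : ℕ) :
    ∫ x, (C * exp (-b * (x - y) ^ 2)) ^ n = C ^ n * √(π / (n * b)) := by
  simp_rw [const_mul_exp_neg_mul_sq_pow]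
  rw [integral_const_mul, integral_sub_right_eq_self (fun x => exp (-(n * b) * x ^ 2)),
    integral_gaussian]

theorem integral_gaussian_density_pow_three {σ : ℝ} (hσ : 0 < σ) (y : ℝ) :
    ∫ x, (1 / (√(2 * π) * σ) * exp (-(1 / (2 * σ ^ 2)) * (x - y) ^ 2)) ^ 3 =
      1 / (2 * √3 * π * σ ^ 2) := by
  have h2π : √(2 * π) ^ 2 = 2 * π := sq_sqrt (by positivity)
  have h3 : √3 ^ 2 = 3 := sq_sqrt (by norm_num)
  have hsqrt : √(π / ((3 : ℕ) * (1 / (2 * σ ^ 2)))) = √(2 * π) * σ / √3 := by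
    rw [sqrt_eq_iff_eq_sq (by positivity) (by positivity), div_pow, mul_pow, h2π, h3]
    field_simp
    push_cast
    ring
  rw [integral_const_mul_exp_neg_mul_sq_pow, hsqrt]
  field_simp
  linear_combination (-1 : ℝ) * h2π

end Gaussian

end

theorem stmt_13_general
    (σ xc r : ℝ) (hσ : 0 < σ)
    (g : ℝ → ℤ → ℝ)
    (hg : ∀ Δx : ℝ, ∀ i : ℤ, g Δx i =
      ∫ x in (((i : ℝ) + r) * Δx - Δx / 2)..(((i : ℝ) + r) * Δx + Δx / 2),
        (1 / (Real.sqrt (2 * π) * σ)) * Real.exp (-(x - xc) ^ 2 / (2 * σ ^ 2))) :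
    Tendsto (fun Δx : ℝ => (1 / Δx ^ 2) * ∑' i : ℤ, g Δx i ^ 3)
      (𝓝[>] 0) (𝓝 (1 / (2 * Real.sqrt 3 * π * σ ^ 2))) := by
  set C := 1 / (√(2 * π) * σ)
  set b := 1 / (2 * σ ^ 2) with hb_def
  have hC : 0 < C := by positivity
  have hb : 0 < b := by positivity
  obtain rfl : g = Pixel.flux (fun x => C * exp (-b * (x - xc) ^ 2)) r := by
    funext Δx i
    refine (hg Δx i).trans (intervalIntegral.integral_congr fun x _ => ?_)
    rw [hb_def]
    ring_nf
  have hbound : ∀ x t, |t - x| ≤ 1 →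
      |C * exp (-b * (t - xc) ^ 2)| ≤ C * exp b * exp (-(b / 2) * (x - xc) ^ 2) := by
    intro x t h
    rw [abs_of_pos (by positivity), mul_assoc]
    exact mul_le_mul_of_nonneg_left (exp_neg_mul_sq_le hb.le h) hC.le
  have hlim := Pixel.tendsto_mul_tsum_flux_div_pow (by fun_prop) r hbound
    (integrable_const_mul_exp_neg_mul_sq_pow (by positivity) three_pos)
  rw [integral_gaussian_density_pow_three hσ] at hlim
  refine hlim.congr' ?_
  filter_upwards [self_mem_nhdsWithin] with Δx (hΔ : 0 < Δx)
  rw [← tsum_mul_left, ← tsum_mul_left]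
  congr with i
  field_simp

/-- **High-resolution limit of `Σ g_i³`.**  For pixels of size `Δx` centered at
`x_i = (i+r)Δx` with Gaussian flux fractions `g_i(x_c)`,
`(1/Δx²) Σ_{i∈ℤ} g_i(x_c)³ → 1/(2√3 π σ²)` as `Δx → 0⁺`. -/
theorem stmt_13
    (σ xc r : ℝ) (hσ : 0 < σ) (hr : r ∈ Set.Ico (0 : ℝ) 1)
    (g : ℝ → ℤ → ℝ)
    (hg : ∀ Δx : ℝ, ∀ i : ℤ, g Δx i =
      ∫ x in (((i : ℝ) + r) * Δx - Δx / 2)..(((i : ℝ) + r) * Δx + Δx / 2),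
        (1 / (Real.sqrt (2 * π) * σ)) * Real.exp (-(x - xc) ^ 2 / (2 * σ ^ 2))) :
    Tendsto (fun Δx : ℝ => (1 / Δx ^ 2) * ∑' i : ℤ, g Δx i ^ 3)
      (𝓝[>] 0) (𝓝 (1 / (2 * Real.sqrt 3 * π * σ ^ 2))) :=
  stmt_13_general σ xc r hσ g hg
end

section
/- Let σ > 0, x_c ∈ ℝ, and r ∈ [0,1). For Δx > 0 define pixel centers x_i = (i + r)·Δx for i ∈ ℤ and g_i(x_c) = ∫_{x_i−Δx/2}^{x_i+Δx/2} Φ(x − x_c) dx, where Φ(x) = (1/(√(2π)σ)) e^{−x²/(2σ²)}. Then lim_{Δx→0⁺} (1/Δx²)·Σ_{i∈ℤ} (x_i − x_c)²·g_i(x_c)³ = 1/(6√3·π). -/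
/-!
After the substitution `u = x - x_c`, pixel `i` is a cell of width `Δx` centred at
`a_i = x_i - x_c`, and `g_i / Δx` is the mean of the Gaussian `Φ` over it. Since `Φ` is
Lipschitz, this mean is `Φ(u) + O(Δx)` for every `u` in the cell, so
`Δx⁻² a_i² g_i³ = Δx · a_i² (g_i / Δx)³` differs from `∫_cell u² Φ(u)³ du` by `Δx` times the
integral over the cell of a fixed integrable (Gaussian-dominated) function. Summing over all
cells, `Δx⁻² Σ a_i² g_i³ = ∫ u² Φ³ + O(Δx)`, and `∫ u² Φ³ = 1 / (6√3 π)` because `Φ³` is a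
multiple of a Gaussian of variance `σ² / 3`.
-/

open Real Filter Topology MeasureTheory Set Function

theorem abs_tsum_sub_integral_le_of_partition {α ι : Type*} [MeasurableSpace α] {μ : Measure α}
    [Countable ι] {s : ι → Set α} (hs : ∀ i, MeasurableSet (s i))
    (hdisj : Pairwise (Disjoint on s)) (hcover : ⋃ i, s i = univ)
    {T : ι → ℝ} {f b : α → ℝ} (hf : Integrable f μ) (hb : Integrable b μ)
    (hT : ∀ i, |T i - ∫ x in s i, f x ∂μ| ≤ ∫ x in s i, b x ∂μ) :
    |∑' i, T i - ∫ x, f x ∂μ| ≤ ∫ x, b x ∂μ := by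
  have hasSum_cells {h : α → ℝ} (hh : Integrable h μ) :
      HasSum (fun i => ∫ x in s i, h x ∂μ) (∫ x, h x ∂μ) := by
    simpa [hcover] using hasSum_integral_iUnion hs hdisj (hcover ▸ hh.integrableOn)
  have hdiff : Summable fun i => T i - ∫ x in s i, f x ∂μ :=
    (hasSum_cells hb).summable.of_norm_bounded hT
  have hsplit : ∑' i, T i - ∫ x, f x ∂μ = ∑' i, (T i - ∫ x in s i, f x ∂μ) := by
    rw [sub_eq_iff_eq_add,
      ((hdiff.hasSum.add (hasSum_cells hf)).congr_fun fun i => by ring).tsum_eq]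
  rw [hsplit]
  exact tsum_of_norm_bounded (f := fun i => T i - ∫ x in s i, f x ∂μ) (hasSum_cells hb) hT

/-- The first term bounds the error of replacing `a²` by `u²`, the second that of replacing the
pixel mean by `φ u`, for a `K`-Lipschitz `φ` dominated by `ψ` on the cell. -/
def pixelErrorBound (K : ℝ) (ψ : ℝ → ℝ) (u : ℝ) : ℝ :=
  (|u| + 1) * ψ u ^ 3 + 3 * K * u ^ 2 * ψ u ^ 2

lemma abs_sq_mul_pow_three_sub_le {a u p q c K Δ : ℝ} (hΔ1 : Δ ≤ 1) (hau : |a - u| ≤ Δ / 2)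
    (hp0 : 0 ≤ p) (hq0 : 0 ≤ q) (hpc : p ≤ c) (hqc : q ≤ c) (hpq : |p - q| ≤ K * Δ) :
    |a ^ 2 * p ^ 3 - u ^ 2 * q ^ 3| ≤ Δ * ((|u| + 1) * c ^ 3 + 3 * K * u ^ 2 * c ^ 2) := by
  have hΔ : 0 ≤ Δ := by linarith [abs_nonneg (a - u)]
  have hsq : |a ^ 2 - u ^ 2| ≤ Δ * (|u| + 1) := by
    have hsum : |a + u| ≤ Δ / 2 + 2 * |u| := by
      calc |a + u| = |(a - u) + 2 * u| := by ring_nf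
        _ ≤ |a - u| + |2 * u| := abs_add_le _ _
        _ ≤ Δ / 2 + 2 * |u| := by rw [abs_mul, abs_two]; linarith
    rw [show a ^ 2 - u ^ 2 = (a - u) * (a + u) by ring, abs_mul]
    nlinarith [abs_nonneg (a - u), abs_nonneg u, abs_nonneg (a + u)]
  have hcube : |p ^ 3 - q ^ 3| ≤ K * Δ * (3 * c ^ 2) := by
    rw [show p ^ 3 - q ^ 3 = (p - q) * (p ^ 2 + p * q + q ^ 2) by ring, abs_mul,
      abs_of_nonneg (by positivity : 0 ≤ p ^ 2 + p * q + q ^ 2)]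
    exact mul_le_mul hpq (by nlinarith) (by positivity) ((abs_nonneg _).trans hpq)
  calc |a ^ 2 * p ^ 3 - u ^ 2 * q ^ 3|
      = |(a ^ 2 - u ^ 2) * p ^ 3 + u ^ 2 * (p ^ 3 - q ^ 3)| := by ring_nf
    _ ≤ |a ^ 2 - u ^ 2| * p ^ 3 + u ^ 2 * |p ^ 3 - q ^ 3| := by
        refine (abs_add_le _ _).trans_eq ?_
        rw [abs_mul, abs_mul, abs_of_nonneg (by positivity : 0 ≤ p ^ 3), abs_sq]
    _ ≤ Δ * (|u| + 1) * c ^ 3 + u ^ 2 * (K * Δ * (3 * c ^ 2)) := by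
        gcongr
    _ = Δ * ((|u| + 1) * c ^ 3 + 3 * K * u ^ 2 * c ^ 2) := by ring

section PixelSum

variable {φ ψ : ℝ → ℝ} {K : NNReal}

lemma abs_pixel_sub_setIntegral_le (hφ0 : ∀ u, 0 ≤ φ u) (hlip : LipschitzWith K φ)
    (henv : ∀ u v, |v - u| ≤ 1 → φ v ≤ ψ u) (hF : Integrable fun u => u ^ 2 * φ u ^ 3)
    (hB : Integrable (pixelErrorBound K ψ)) {Δ : ℝ} (hΔ : 0 < Δ) (hΔ1 : Δ ≤ 1) (L : ℝ) :
    |1 / Δ ^ 2 * ((L + Δ / 2) ^ 2 * (∫ u in Ioc L (L + Δ), φ u) ^ 3) -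
        ∫ u in Ioc L (L + Δ), u ^ 2 * φ u ^ 3| ≤
      ∫ u in Ioc L (L + Δ), Δ * pixelErrorBound K ψ u := by
  set I := Ioc L (L + Δ)
  set m := ∫ u in I, φ u
  have hIfin : volume I < ⊤ := measure_Ioc_lt_top
  have hconstI (c : ℝ) : IntegrableOn (fun _ => c) I := integrableOn_const hIfin.ne
  have hvol : volume.real I = Δ := by simp [I, Real.volume_real_Ioc, hΔ.le]
  have hdist : ∀ u ∈ I, ∀ v ∈ I, |v - u| ≤ Δ := fun u hu v hv =>
    abs_le.2 ⟨by linarith [hu.2, hv.1], by linarith [hu.1, hv.2]⟩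
  have hm0 : 0 ≤ m := setIntegral_nonneg measurableSet_Ioc fun u _ => hφ0 u
  have hmean_le : ∀ u ∈ I, m / Δ ≤ ψ u := by
    intro u hu
    have := norm_setIntegral_le_of_norm_le_const (f := φ) hIfin fun v hv =>
      (abs_of_nonneg (hφ0 v)).trans_le (henv u v ((hdist u hu v hv).trans hΔ1))
    rw [div_le_iff₀ hΔ, ← hvol]
    exact (le_abs_self m).trans this
  have hmean_sub : ∀ u ∈ I, |m / Δ - φ u| ≤ K * Δ := by
    intro u hu
    have hsub : m - Δ * φ u = ∫ v in I, (φ v - φ u) := by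
      rw [integral_sub hlip.continuous.integrableOn_Ioc (hconstI _),
        setIntegral_const, hvol, smul_eq_mul]
    have := norm_setIntegral_le_of_norm_le_const (f := fun v => φ v - φ u) hIfin fun v hv =>
      (hlip.dist_le_mul v u).trans (mul_le_mul_of_nonneg_left (hdist u hu v hv) K.2)
    rw [hvol, ← hsub] at this
    rw [show m / Δ - φ u = (m - Δ * φ u) / Δ by field_simp, abs_div, abs_of_pos hΔ,
      div_le_iff₀ hΔ]
    exact this
  have hconst : 1 / Δ ^ 2 * ((L + Δ / 2) ^ 2 * m ^ 3) =
      ∫ _ in I, (L + Δ / 2) ^ 2 * (m / Δ) ^ 3 := by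
    rw [setIntegral_const, hvol, smul_eq_mul]
    field_simp
  rw [hconst, ← integral_sub (hconstI ((L + Δ / 2) ^ 2 * (m / Δ) ^ 3)) hF.integrableOn]
  refine norm_integral_le_of_norm_le
    (f := fun u => (L + Δ / 2) ^ 2 * (m / Δ) ^ 3 - u ^ 2 * φ u ^ 3) (hB.integrableOn.const_mul Δ)
    ((ae_restrict_iff' measurableSet_Ioc).2 (Eventually.of_forall fun u hu => ?_))
  refine abs_sq_mul_pow_three_sub_le hΔ1 ?_ (div_nonneg hm0 hΔ.le) (hφ0 u) (hmean_le u hu)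
    (henv u u (by simp)) (hmean_sub u hu)
  exact abs_le.2 ⟨by linarith [hu.2], by linarith [hu.1]⟩

theorem abs_pixelSum_sub_integral_le (hφ0 : ∀ u, 0 ≤ φ u) (hlip : LipschitzWith K φ)
    (henv : ∀ u v, |v - u| ≤ 1 → φ v ≤ ψ u) (hF : Integrable fun u => u ^ 2 * φ u ^ 3)
    (hB : Integrable (pixelErrorBound K ψ)) {Δ : ℝ} (hΔ : 0 < Δ) (hΔ1 : Δ ≤ 1) (s : ℝ) :
    |1 / Δ ^ 2 * ∑' i : ℤ, (s + i * Δ + Δ / 2) ^ 2 *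
          (∫ u in Ioc (s + i * Δ) (s + i * Δ + Δ), φ u) ^ 3 - ∫ u, u ^ 2 * φ u ^ 3| ≤
      Δ * ∫ u, pixelErrorBound K ψ u := by
  have hcells : ∀ i : ℤ, Ioc (s + i • Δ) (s + (i + 1) • Δ) = Ioc (s + i * Δ) (s + i * Δ + Δ) :=
    fun i => by rw [add_smul, one_smul, zsmul_eq_mul, add_assoc]
  rw [← tsum_mul_left, ← integral_const_mul]
  refine abs_tsum_sub_integral_le_of_partition (fun _ => measurableSet_Ioc) ?_ ?_ hF
    (hB.const_mul Δ) fun i => abs_pixel_sub_setIntegral_le hφ0 hlip henv hF hB hΔ hΔ1 _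
  · simpa only [hcells] using pairwise_disjoint_Ioc_add_zsmul s Δ
  · simpa only [hcells] using iUnion_Ioc_add_zsmul hΔ s

end PixelSum

section GaussianMoments

variable {b : ℝ}

lemma integrable_sq_mul_exp_neg_mul_sq (hb : 0 < b) :
    Integrable fun x : ℝ => x ^ 2 * exp (-b * x ^ 2) := by
  simpa only [rpow_two] using integrable_rpow_mul_exp_neg_mul_sq hb (s := 2) (by norm_num)

lemma integrable_abs_mul_exp_neg_mul_sq (hb : 0 < b) :
    Integrable fun x : ℝ => |x| * exp (-b * x ^ 2) := by
  simpa only [abs_mul, abs_of_pos (exp_pos _)] using (integrable_mul_exp_neg_mul_sq hb).abs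

lemma integral_sq_mul_exp_neg_mul_sq (hb : 0 < b) :
    ∫ x : ℝ, x ^ 2 * exp (-b * x ^ 2) = √(π / b) / (2 * b) := by
  have hderiv (x : ℝ) : HasDerivAt (fun x => x * exp (-b * x ^ 2))
      (exp (-b * x ^ 2) - 2 * b * (x ^ 2 * exp (-b * x ^ 2))) x := by
    have h := (hasDerivAt_id x).mul (((hasDerivAt_pow 2 x).const_mul (-b)).exp)
    refine h.congr_deriv ?_
    simp only [id_eq, Nat.cast_ofNat, pow_one, Nat.add_one_sub_one]
    ring
  -- integration by parts: the derivative of `x e^{-bx²}` integrates to zero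
  have hzero := integral_eq_zero_of_hasDerivAt_of_integrable hderiv
    ((integrable_exp_neg_mul_sq hb).sub ((integrable_sq_mul_exp_neg_mul_sq hb).const_mul _))
    (integrable_mul_exp_neg_mul_sq hb)
  rw [integral_sub (integrable_exp_neg_mul_sq hb)
    ((integrable_sq_mul_exp_neg_mul_sq hb).const_mul _), integral_const_mul, integral_gaussian,
    sub_eq_zero] at hzero
  rw [eq_div_iff (by positivity), hzero]
  ring

end GaussianMoments

lemma mul_exp_neg_sq_div_pow (c d u : ℝ) (n : ℕ) :
    (c * exp (-u ^ 2 / d)) ^ n = c ^ n * exp (-(n / d) * u ^ 2) := by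
  rw [mul_pow, ← exp_nat_mul]
  ring_nf

section GaussianPSF

variable {σ : ℝ}

noncomputable def gaussianPSF (σ u : ℝ) : ℝ := 1 / (√(2 * π) * σ) * exp (-u ^ 2 / (2 * σ ^ 2))

/-- Dominates `gaussianPSF σ v` whenever `|v - u| ≤ 1`, since then `u² ≤ 2v² + 2`. -/
noncomputable def gaussianPSFEnvelope (σ u : ℝ) : ℝ :=
  1 / (√(2 * π) * σ) * exp (1 / (2 * σ ^ 2)) * exp (-u ^ 2 / (4 * σ ^ 2))

lemma gaussianPSF_nonneg (hσ : 0 < σ) (u : ℝ) : 0 ≤ gaussianPSF σ u := by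
  unfold gaussianPSF
  positivity

lemma gaussianPSF_le_envelope (hσ : 0 < σ) {u v : ℝ} (h : |v - u| ≤ 1) :
    gaussianPSF σ v ≤ gaussianPSFEnvelope σ u := by
  unfold gaussianPSF gaussianPSFEnvelope
  rw [mul_assoc, ← exp_add]
  gcongr
  have hsq : u ^ 2 ≤ 2 * v ^ 2 + 2 := by
    nlinarith [sq_nonneg (2 * v - u), sq_le_one_iff_abs_le_one (v - u) |>.2 h]
  have hgap : 1 / (2 * σ ^ 2) + -u ^ 2 / (4 * σ ^ 2) - -v ^ 2 / (2 * σ ^ 2) =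
      (2 * v ^ 2 + 2 - u ^ 2) / (4 * σ ^ 2) := by
    field_simp
    ring
  linarith [div_nonneg (sub_nonneg.2 hsq) (by positivity : (0 : ℝ) ≤ 4 * σ ^ 2)]

lemma hasDerivAt_gaussianPSF (σ x : ℝ) :
    HasDerivAt (gaussianPSF σ) (-(x / σ ^ 2) * gaussianPSF σ x) x := by
  have h := (((hasDerivAt_pow 2 x).neg.div_const (2 * σ ^ 2)).exp).const_mul
    (1 / (√(2 * π) * σ))
  refine h.congr_deriv ?_
  simp only [gaussianPSF, Pi.neg_apply, Nat.cast_ofNat, pow_one, Nat.add_one_sub_one]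
  field_simp

lemma abs_mul_exp_neg_sq_div_le (hσ : 0 < σ) (x : ℝ) :
    |x| * exp (-x ^ 2 / (2 * σ ^ 2)) ≤ σ := by
  have hamgm : |x| ≤ σ * (1 + x ^ 2 / (2 * σ ^ 2)) := by
    rw [mul_add, mul_one, show σ * (x ^ 2 / (2 * σ ^ 2)) = x ^ 2 / (2 * σ) by field_simp,
      ← sub_nonneg, show σ + x ^ 2 / (2 * σ) - |x| = ((|x| - σ) ^ 2 + σ ^ 2) / (2 * σ) by
        field_simp; linear_combination -(sq_abs x)]
    positivity
  have hexp := add_one_le_exp (x ^ 2 / (2 * σ ^ 2))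
  calc |x| * exp (-x ^ 2 / (2 * σ ^ 2))
      ≤ σ * exp (x ^ 2 / (2 * σ ^ 2)) * exp (-x ^ 2 / (2 * σ ^ 2)) := by
        gcongr
        linarith [mul_le_mul_of_nonneg_left hexp hσ.le]
    _ = σ := by rw [mul_assoc, ← exp_add, neg_div, add_neg_cancel, exp_zero, mul_one]

lemma lipschitzWith_gaussianPSF (hσ : 0 < σ) :
    LipschitzWith (1 / (√(2 * π) * σ ^ 2)).toNNReal (gaussianPSF σ) := by
  refine lipschitzWith_of_nnnorm_deriv_le (fun x => (hasDerivAt_gaussianPSF σ x).differentiableAt)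
    fun x => ?_
  rw [(hasDerivAt_gaussianPSF σ x).deriv, ← NNReal.coe_le_coe, coe_nnnorm,
    Real.coe_toNNReal _ (by positivity), Real.norm_eq_abs]
  unfold gaussianPSF
  calc |-(x / σ ^ 2) * (1 / (√(2 * π) * σ) * exp (-x ^ 2 / (2 * σ ^ 2)))|
      = |x| * exp (-x ^ 2 / (2 * σ ^ 2)) / (√(2 * π) * σ * σ ^ 2) := by
        rw [abs_mul, abs_neg, abs_div, abs_of_pos (by positivity : 0 < σ ^ 2),
          abs_of_pos (by positivity : 0 < 1 / (√(2 * π) * σ) * exp (-x ^ 2 / (2 * σ ^ 2)))]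
        field_simp
    _ ≤ σ / (√(2 * π) * σ * σ ^ 2) := by gcongr; exact abs_mul_exp_neg_sq_div_le hσ x
    _ = 1 / (√(2 * π) * σ ^ 2) := by field_simp

lemma integrable_sq_mul_gaussianPSF_pow_three (hσ : 0 < σ) :
    Integrable fun u => u ^ 2 * gaussianPSF σ u ^ 3 := by
  simp only [gaussianPSF, mul_exp_neg_sq_div_pow, mul_left_comm _ ((1 / (√(2 * π) * σ)) ^ 3)]
  exact (integrable_sq_mul_exp_neg_mul_sq (by positivity)).const_mul _

lemma integral_sq_mul_gaussianPSF_pow_three (hσ : 0 < σ) :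
    ∫ u, u ^ 2 * gaussianPSF σ u ^ 3 = 1 / (6 * √3 * π) := by
  simp only [gaussianPSF, mul_exp_neg_sq_div_pow, mul_left_comm _ ((1 / (√(2 * π) * σ)) ^ 3)]
  rw [integral_const_mul, integral_sq_mul_exp_neg_mul_sq (by positivity)]
  have hsqrt : √(π / ((3 : ℕ) / (2 * σ ^ 2))) = √(2 * π) * σ / √3 := by
    rw [show π / ((3 : ℕ) / (2 * σ ^ 2)) = 2 * π * σ ^ 2 / 3 by push_cast; field_simp,
      sqrt_div' _ (by norm_num), sqrt_mul' _ (by positivity), sqrt_sq hσ.le]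
  have h2π : √(2 * π) ^ 2 = 2 * π := sq_sqrt (by positivity)
  rw [hsqrt]
  field_simp
  rw [h2π]
  push_cast
  ring

lemma integrable_pixelErrorBound_gaussianPSFEnvelope (hσ : 0 < σ) (K : ℝ) :
    Integrable (pixelErrorBound K (gaussianPSFEnvelope σ)) := by
  set c := 1 / (√(2 * π) * σ) * exp (1 / (2 * σ ^ 2))
  have hb (n : ℕ) (hn : 0 < n) : 0 < (n : ℝ) / (4 * σ ^ 2) := by positivity
  have h := (((integrable_abs_mul_exp_neg_mul_sq (hb 3 (by norm_num))).add
    (integrable_exp_neg_mul_sq (hb 3 (by norm_num)))).const_mul (c ^ 3)).add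
    ((integrable_sq_mul_exp_neg_mul_sq (hb 2 (by norm_num))).const_mul (3 * K * c ^ 2))
  refine h.congr (Eventually.of_forall fun u => ?_)
  simp only [pixelErrorBound, gaussianPSFEnvelope, mul_exp_neg_sq_div_pow, Pi.add_apply, c]
  ring

end GaussianPSF

theorem stmt_14_general
    (σ xc r : ℝ) (hσ : 0 < σ)
    (g : ℝ → ℤ → ℝ)
    (hg : ∀ Δx : ℝ, ∀ i : ℤ, g Δx i =
      ∫ x in (((i : ℝ) + r) * Δx - Δx / 2)..(((i : ℝ) + r) * Δx + Δx / 2),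
        (1 / (Real.sqrt (2 * π) * σ)) * Real.exp (-(x - xc) ^ 2 / (2 * σ ^ 2))) :
    Tendsto (fun Δx : ℝ =>
        (1 / Δx ^ 2) * ∑' i : ℤ, (((i : ℝ) + r) * Δx - xc) ^ 2 * g Δx i ^ 3)
      (𝓝[>] 0) (𝓝 (1 / (6 * Real.sqrt 3 * π))) := by
  set B := pixelErrorBound (1 / (√(2 * π) * σ ^ 2)).toNNReal (gaussianPSFEnvelope σ)
  have hpixel {Δx : ℝ} (hΔ : 0 < Δx) (i : ℤ) :
      g Δx i = ∫ u in Ioc ((r - 1 / 2) * Δx - xc + i * Δx)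
        ((r - 1 / 2) * Δx - xc + i * Δx + Δx), gaussianPSF σ u := by
    rw [hg]
    change (∫ x in _.._, gaussianPSF σ (x - xc)) = _
    rw [intervalIntegral.integral_comp_sub_right (gaussianPSF σ),
      intervalIntegral.integral_of_le (by linarith)]
    congr 2
    congr 1 <;> ring
  have hbound : ∀ᶠ Δx in 𝓝[>] 0, ‖1 / Δx ^ 2 * ∑' i : ℤ, (((i : ℝ) + r) * Δx - xc) ^ 2 *
      g Δx i ^ 3 - 1 / (6 * √3 * π)‖ ≤ Δx * ∫ u, B u := by
    filter_upwards [Ioc_mem_nhdsGT zero_lt_one] with Δx ⟨hΔ, hΔ1⟩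
    have h := abs_pixelSum_sub_integral_le (gaussianPSF_nonneg hσ) (lipschitzWith_gaussianPSF hσ)
      (fun _ _ => gaussianPSF_le_envelope hσ) (integrable_sq_mul_gaussianPSF_pow_three hσ)
      (integrable_pixelErrorBound_gaussianPSFEnvelope hσ _) hΔ hΔ1 ((r - 1 / 2) * Δx - xc)
    rw [integral_sq_mul_gaussianPSF_pow_three hσ] at h
    have hcells : ∑' i : ℤ, (((i : ℝ) + r) * Δx - xc) ^ 2 * g Δx i ^ 3 =
        ∑' i : ℤ, ((r - 1 / 2) * Δx - xc + i * Δx + Δx / 2) ^ 2 *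
          (∫ u in Ioc ((r - 1 / 2) * Δx - xc + i * Δx) ((r - 1 / 2) * Δx - xc + i * Δx + Δx),
            gaussianPSF σ u) ^ 3 :=
      tsum_congr fun i => by rw [hpixel hΔ]; ring_nf
    rwa [Real.norm_eq_abs, hcells]
  have hlim : Tendsto (fun Δx : ℝ => Δx * ∫ u, B u) (𝓝[>] 0) (𝓝 0) :=
    ((continuous_mul_const _).tendsto' 0 0 (zero_mul _)).mono_left nhdsWithin_le_nhds
  exact tendsto_sub_nhds_zero_iff.1 (squeeze_zero_norm' hbound hlim)

/-- **High-resolution limit of `Σ (x_i − x_c)² g_i³`.**  For pixels of size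
`Δx` centered at `x_i = (i+r)Δx` with Gaussian flux fractions `g_i(x_c)`,
`(1/Δx²) Σ_{i∈ℤ} (x_i − x_c)² g_i(x_c)³ → 1/(6√3 π)` as `Δx → 0⁺`. -/
theorem stmt_14
    (σ xc r : ℝ) (hσ : 0 < σ) (hr : r ∈ Set.Ico (0 : ℝ) 1)
    (g : ℝ → ℤ → ℝ)
    (hg : ∀ Δx : ℝ, ∀ i : ℤ, g Δx i =
      ∫ x in (((i : ℝ) + r) * Δx - Δx / 2)..(((i : ℝ) + r) * Δx + Δx / 2),
        (1 / (Real.sqrt (2 * π) * σ)) * Real.exp (-(x - xc) ^ 2 / (2 * σ ^ 2))) :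
    Tendsto (fun Δx : ℝ =>
        (1 / Δx ^ 2) * ∑' i : ℤ, (((i : ℝ) + r) * Δx - xc) ^ 2 * g Δx i ^ 3)
      (𝓝[>] 0) (𝓝 (1 / (6 * Real.sqrt 3 * π))) :=
  stmt_14_general σ xc r hσ g hg
end
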